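/- The Fourier symbol of the weighted Jacobi iteration (weight ω) applied to the central-difference convection-diffusion stencil (1/h²)[[0, h/2−ε, 0], [−h/2−ε, 4ε, h/2−ε], [0, −h/2−ε, 0]] is S(θ1, θ2) = 1 − ω + (ω/(4ε))(2ε cos θ1 + 2ε cos θ2 − i h (sin θ1 + sin θ2)), and |S(θ1, θ2)| > 1 for some frequency whenever h/(4ε) is large enough; in particular weighted Jacobi diverges for sufficiently small ε at fixed h and ω ∈ (0,1]. -/

import Mathlib

open Real Complex

/-- The Fourier symbol of weighted Jacobi applied to the central-difference
convection-diffusion stencil equals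
`1 − (ω/(4ε))(4ε − 2ε cos θ1 − 2ε cos θ2 + i h (sin θ1 + sin θ2))`, and for every
`ω ∈ (0,1]` there is a constant `C > 0` such that whenever `h/(4ε) > C` some
frequency has symbol modulus greater than `1`; in particular weighted Jacobi
diverges for sufficiently small `ε` at fixed `h`. -/
theorem convection_diffusion_jacobi_symbol_divergence
    (ω : ℝ) (hω : ω ∈ Set.Ioc (0 : ℝ) 1) :
    (∀ ε h θ1 θ2 : ℝ, 0 < ε → 0 < h →
      1 - (ω * h ^ 2 / (4 * ε)) *
        ((1 / (h ^ 2 : ℂ)) * (4 * ε - 2 * ε * Real.cos θ1 - 2 * ε * Real.cos θ2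
          + Complex.I * h * (Real.sin θ1 + Real.sin θ2))) =
      1 - (ω / (4 * ε) : ℂ) * (4 * ε - 2 * ε * Real.cos θ1 - 2 * ε * Real.cos θ2
          + Complex.I * h * (Real.sin θ1 + Real.sin θ2))) ∧
    (∃ C : ℝ, 0 < C ∧ ∀ ε h : ℝ, 0 < ε → 0 < h → C < h / (4 * ε) →
      ∃ θ1 θ2 : ℝ, 1 < ‖
        (1 - (ω / (4 * ε) : ℂ) * (4 * ε - 2 * ε * Real.cos θ1 - 2 * ε * Real.cos θ2
          + Complex.I * h * (Real.sin θ1 + Real.sin θ2)))‖) := by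
  obtain ⟨hω0, hω1⟩ := hω
  constructor
  · intro ε h θ1 θ2 hε hh
    have hh' : (h : ℂ) ≠ 0 := Complex.ofReal_ne_zero.mpr hh.ne'
    have hε' : (ε : ℂ) ≠ 0 := Complex.ofReal_ne_zero.mpr hε.ne'
    field_simp
  · refine ⟨1 / ω, by positivity, fun ε h hε hh hC => ⟨π / 2, π / 2, ?_⟩⟩
    have hε4 : (4 : ℝ) * ε ≠ 0 := by positivity
    set z : ℂ := 1 - (ω / (4 * ε) : ℂ) * (4 * ε - 2 * ε * Real.cos (π / 2)
        - 2 * ε * Real.cos (π / 2) + Complex.I * h * (Real.sin (π / 2) + Real.sin (π / 2)))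
    have hz : z = ((1 - ω : ℝ) : ℂ) + ((-(ω * (2 * h) / (4 * ε)) : ℝ) : ℂ) * Complex.I := by
      have hε' : (ε : ℂ) ≠ 0 := Complex.ofReal_ne_zero.mpr hε.ne'
      simp only [z, Real.cos_pi_div_two, Real.sin_pi_div_two]
      push_cast
      field_simp
      ring
    have him : z.im = -(ω * (2 * h) / (4 * ε)) := by rw [hz]; simp only [Complex.add_im, Complex.ofReal_im, Complex.mul_im, Complex.ofReal_re, Complex.I_re, Complex.I_im]; ring
    have h1 : 1 < |z.im| := by
      rw [him, abs_neg, abs_of_pos (by positivity)]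
      have h2 : 1 < ω * (h / (4 * ε)) := by
        calc 1 = ω * (1 / ω) := by field_simp
        _ < ω * (h / (4 * ε)) := mul_lt_mul_of_pos_left hC hω0
      have h3 : ω * (h / (4 * ε)) ≤ ω * (2 * h) / (4 * ε) := by
        rw [mul_div_assoc]
        gcongr
        linarith
      linarith
    exact lt_of_lt_of_le h1 (Complex.abs_im_le_norm z)
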